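/- For every integer s ≥ 4 and every real number x ≥ s − 1 − 1/s, the derivative f_s′(x) = s/(sx+1) − (s−1)·ln(1 + 1/x) + (s−1)/(x+1) is strictly positive; in particular f_s is strictly increasing on [s − 1 − 1/s, ∞). -/

import Mathlib

/-!
Since `log (1 + 1/x) < 1/x`, the derivative exceeds `s/(sx+1) − (s−1)/(x(x+1))`, and
`s·x(x+1) − (s−1)(sx+1) ≥ (s−1)(x−1)` as soon as `sx ≥ s² − s − 1`; this is positive for
`x > 1`, which holds on `[s − 1 − 1/s, ∞)` once `s ≥ 4`.
-/

noncomputable section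

/-- `f_s(x) = ln(sx+1) − (s−1)·x·ln(1 + 1/x)`. -/
def fS (s x : ℝ) : ℝ := Real.log (s * x + 1) - (s - 1) * x * Real.log (1 + 1 / x)

end

open Real

noncomputable def fSDeriv (s x : ℝ) : ℝ :=
  s / (s * x + 1) - (s - 1) * log (1 + 1 / x) + (s - 1) / (x + 1)

theorem hasDerivAt_fS (s : ℝ) {x : ℝ} (hx : 0 < x) (hsx : s * x + 1 ≠ 0) :
    HasDerivAt (fS s) (fSDeriv s x) x := by
  have hlin : HasDerivAt (fun y => s * y + 1) s x := by
    simpa using ((hasDerivAt_id x).const_mul s).add_const 1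
  have hinv : HasDerivAt (fun y => 1 + 1 / y) (-(x ^ 2)⁻¹) x := by
    simpa [one_div] using (hasDerivAt_inv hx.ne').const_add 1
  have hmul : HasDerivAt (fun y => (s - 1) * y) (s - 1) x := by
    simpa using (hasDerivAt_id x).const_mul (s - 1)
  refine ((hlin.log hsx).sub (hmul.mul (hinv.log (by positivity)))).congr_deriv ?_
  unfold fSDeriv
  field_simp
  ring

theorem log_one_add_one_div_lt {x : ℝ} (hx : 0 < x) : log (1 + 1 / x) < 1 / x := by
  have h := log_lt_sub_one_of_pos (by positivity : 0 < 1 + 1 / x) (by simp [hx.ne'])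
  linarith

theorem fSDeriv_pos {s x : ℝ} (hs : 1 < s) (hx₁ : 1 < x) (hx : s - 1 - 1 / s ≤ x) :
    0 < fSDeriv s x := by
  have hx₀ : 0 < x := by linarith
  have hsx : s ^ 2 - s - 1 ≤ s * x := by
    have := mul_le_mul_of_nonneg_left hx (by linarith : 0 ≤ s)
    rwa [show s * (s - 1 - 1 / s) = s ^ 2 - s - 1 by field_simp] at this
  -- `s·x(x+1) − (s−1)(sx+1) = x(sx − (s² − s − 1)) + (s−1)(x−1)`
  have hkey : (s - 1) / (x * (x + 1)) < s / (s * x + 1) := by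
    rw [div_lt_div_iff₀ (by positivity) (by nlinarith)]
    nlinarith [mul_le_mul_of_nonneg_left hsx hx₀.le,
      mul_pos (by linarith : 0 < s - 1) (by linarith : 0 < x - 1)]
  have hlog := mul_lt_mul_of_pos_left (log_one_add_one_div_lt hx₀) (by linarith : 0 < s - 1)
  have hsplit : (s - 1) * (1 / x) - (s - 1) / (x + 1) = (s - 1) / (x * (x + 1)) := by
    field_simp
    ring
  unfold fSDeriv
  linarith

theorem stmt_9 (s : ℤ) (hs : 4 ≤ s) :
    (∀ x : ℝ, (s : ℝ) - 1 - 1 / (s : ℝ) ≤ x →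
      HasDerivAt (fS (s : ℝ))
        ((s : ℝ) / ((s : ℝ) * x + 1) - ((s : ℝ) - 1) * Real.log (1 + 1 / x)
          + ((s : ℝ) - 1) / (x + 1)) x ∧
      0 < (s : ℝ) / ((s : ℝ) * x + 1) - ((s : ℝ) - 1) * Real.log (1 + 1 / x)
          + ((s : ℝ) - 1) / (x + 1)) ∧
    StrictMonoOn (fS (s : ℝ)) (Set.Ici ((s : ℝ) - 1 - 1 / (s : ℝ))) := by
  have hs₄ : (4 : ℝ) ≤ s := by exact_mod_cast hs
  have hlow : 1 < (s : ℝ) - 1 - 1 / s := by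
    have : 1 / (s : ℝ) ≤ 1 / 4 := one_div_le_one_div_of_le (by norm_num) hs₄
    linarith
  have hderiv : ∀ x : ℝ, (s : ℝ) - 1 - 1 / s ≤ x →
      HasDerivAt (fS s) (fSDeriv s x) x ∧ 0 < fSDeriv s x := fun x hx =>
    ⟨hasDerivAt_fS s (by linarith) (by nlinarith), fSDeriv_pos (by linarith) (by linarith) hx⟩
  refine ⟨hderiv, strictMonoOn_of_hasDerivWithinAt_pos (f' := fSDeriv s) (convex_Ici _)
    (fun x hx => (hderiv x hx).1.continuousAt.continuousWithinAt) (fun x hx => ?_)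
    (fun x hx => ?_)⟩
  · rw [interior_Ici] at hx
    exact (hderiv x (le_of_lt hx)).1.hasDerivWithinAt
  · rw [interior_Ici] at hx
    exact (hderiv x (le_of_lt hx)).2
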